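/- arXiv:2202.08420 — 2 statements merged into one kernel-verified Lean document; each statement's English description precedes it below -/
import Mathlib

section
/- The q-bit stochastic quantizer Q applied coordinatewise to a vector x ∈ R^d is unbiased, E[Q(x,q)] = x, and satisfies the variance bound E[||Q(x,q) - x||_2^2] ≤ min(d/2^{2(q-1)}, sqrt(d)/2^{q-1}) · ||x||_2^2. -/
/-!
With `r i = s |x i| / ‖x‖`, the coordinate `ξ i` rounds `r i` up or down to an integer (then
divides by `s`) and rounds up with probability `fract (r i)`. Hence `E[ξ i] = r i / s` and
`E[(ξ i - r i / s)²] = fract (r i) (1 - fract (r i)) / s²`; unbiasedness follows from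
`‖x‖ sign (x i) r i / s = x i`. By linearity of expectation,
`E‖Q - x‖² ≤ ‖x‖² / s² · ∑ i, fract (r i) (1 - fract (r i))`; each summand is at most
`min 1 (r i)`, and `∑ i, r i ≤ s √d` by Cauchy–Schwarz.
-/

open MeasureTheory Finset

namespace Real

theorem sign_mul_abs (x : ℝ) : sign x * |x| = x := by
  obtain hx | rfl | hx := lt_trichotomy x 0
  · rw [sign_of_neg hx, abs_of_neg hx]; ring
  · simp
  · rw [sign_of_pos hx, abs_of_pos hx]; ring

theorem sq_mul_sign_le (a x : ℝ) : (a * sign x) ^ 2 ≤ a ^ 2 := by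
  rw [mul_pow]
  refine mul_le_of_le_one_right (sq_nonneg a) ?_
  obtain h | h | h := sign_apply_eq x <;> norm_num [h]

theorem sqrt_sum_sq_ne_zero {ι : Type*} [Fintype ι] {x : ι → ℝ} (hx : x ≠ 0) :
    √(∑ i, x i ^ 2) ≠ 0 := by
  obtain ⟨j, hj⟩ := Function.ne_iff.mp hx
  exact sqrt_ne_zero'.mpr
    (sum_pos' (fun i _ ↦ sq_nonneg (x i)) ⟨j, mem_univ j, sq_pos_of_ne_zero hj⟩)

theorem sum_abs_le_sqrt_card_mul_sqrt_sum_sq {ι : Type*} [Fintype ι] (x : ι → ℝ) :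
    ∑ i, |x i| ≤ √(Fintype.card ι) * √(∑ i, x i ^ 2) := by
  rw [← sqrt_mul (Nat.cast_nonneg _), le_sqrt (by positivity) (by positivity)]
  simpa [sq_abs] using sq_sum_le_card_mul_sum_sq (s := univ) (f := fun i ↦ |x i|)

end Real

namespace Int

variable {R : Type*} [CommRing R] [LinearOrder R] [IsOrderedRing R] [FloorRing R]

theorem ceil_mul_fract_add_floor_mul_one_sub_fract (r : R) :
    ⌈r⌉ * fract r + ⌊r⌋ * (1 - fract r) = r := by
  rcases fract_eq_zero_or_add_one_sub_ceil r with h | h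
  · rw [h, ← self_sub_fract, h]; ring
  · rw [← self_sub_fract r, h]; ring

theorem sq_ceil_sub_mul_fract_add_sq_floor_sub_mul_one_sub_fract (r : R) :
    (⌈r⌉ - r) ^ 2 * fract r + (⌊r⌋ - r) ^ 2 * (1 - fract r) = fract r * (1 - fract r) := by
  rcases fract_eq_zero_or_add_one_sub_ceil r with h | h
  · rw [h, ← self_sub_fract, h]; ring
  · rw [← self_sub_fract r, h]; ring

theorem fract_mul_one_sub_fract_nonneg (r : R) : 0 ≤ fract r * (1 - fract r) :=
  mul_nonneg (fract_nonneg r) (sub_nonneg.mpr (fract_lt_one r).le)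

theorem fract_mul_one_sub_fract_le_min {r : R} (hr : 0 ≤ r) :
    fract r * (1 - fract r) ≤ min 1 r := by
  have hle : fract r * (1 - fract r) ≤ fract r :=
    mul_le_of_le_one_right (fract_nonneg r) (sub_le_self 1 (fract_nonneg r))
  have hfract : fract r ≤ r := by
    have : (0 : R) ≤ ⌊r⌋ := mod_cast floor_nonneg.mpr hr
    exact sub_le_self r this
  exact le_min (hle.trans (fract_lt_one r).le) (hle.trans hfract)

end Int

section TwoValued

variable {Ω : Type*} {ξ : Ω → ℝ} {a b : ℝ}

theorem comp_eq_piecewise_of_forall_eq_or_eq (h : ∀ ω, ξ ω = a ∨ ξ ω = b) (g : ℝ → ℝ) :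
    (fun ω ↦ g (ξ ω)) = {ω | ξ ω = a}.piecewise (fun _ ↦ g a) (fun _ ↦ g b) := by
  funext ω
  by_cases hω : ξ ω = a
  · simp [hω]
  · rw [Set.piecewise_eq_of_notMem {ω | ξ ω = a} _ _ hω, (h ω).resolve_left hω]

variable [MeasurableSpace Ω] {P : Measure Ω} [IsProbabilityMeasure P]

theorem integrable_comp_of_forall_eq_or_eq (hξ : Measurable ξ) (h : ∀ ω, ξ ω = a ∨ ξ ω = b)
    (g : ℝ → ℝ) : Integrable (fun ω ↦ g (ξ ω)) P := by
  rw [comp_eq_piecewise_of_forall_eq_or_eq h]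
  exact .piecewise (hξ (measurableSet_singleton a)) integrableOn_const integrableOn_const

theorem integral_comp_of_forall_eq_or_eq (hξ : Measurable ξ) (h : ∀ ω, ξ ω = a ∨ ξ ω = b)
    (g : ℝ → ℝ) :
    ∫ ω, g (ξ ω) ∂P = g a * P.real {ω | ξ ω = a} + g b * (1 - P.real {ω | ξ ω = a}) := by
  have hA : MeasurableSet {ω | ξ ω = a} := hξ (measurableSet_singleton a)
  rw [comp_eq_piecewise_of_forall_eq_or_eq h, integral_piecewise hA integrableOn_const
    integrableOn_const, setIntegral_const, setIntegral_const, probReal_compl_eq_one_sub hA,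
    smul_eq_mul, smul_eq_mul, mul_comm, mul_comm (1 - _)]

end TwoValued

section StochasticRounding

variable {Ω : Type*} [MeasurableSpace Ω] {P : Measure Ω} [IsProbabilityMeasure P]
  {ξ : Ω → ℝ} {r s : ℝ}

theorem integral_comp_of_stochastic_rounding (hξ : Measurable ξ)
    (hrange : ∀ ω, ξ ω = ⌈r⌉ / s ∨ ξ ω = ⌊r⌋ / s)
    (hceil : P {ω | ξ ω = ⌈r⌉ / s} = ENNReal.ofReal (r - ⌊r⌋)) (g : ℝ → ℝ) :
    ∫ ω, g (ξ ω) ∂P = g (⌈r⌉ / s) * Int.fract r + g (⌊r⌋ / s) * (1 - Int.fract r) := by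
  rw [integral_comp_of_forall_eq_or_eq hξ hrange, measureReal_def, hceil, Int.self_sub_floor,
    ENNReal.toReal_ofReal (Int.fract_nonneg r)]

theorem integral_of_stochastic_rounding (hξ : Measurable ξ)
    (hrange : ∀ ω, ξ ω = ⌈r⌉ / s ∨ ξ ω = ⌊r⌋ / s)
    (hceil : P {ω | ξ ω = ⌈r⌉ / s} = ENNReal.ofReal (r - ⌊r⌋)) :
    ∫ ω, ξ ω ∂P = r / s := by
  refine (integral_comp_of_stochastic_rounding hξ hrange hceil fun y ↦ y).trans ?_
  conv_rhs => rw [← Int.ceil_mul_fract_add_floor_mul_one_sub_fract r]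
  ring

theorem integral_sq_mul_sub_of_stochastic_rounding (hξ : Measurable ξ)
    (hrange : ∀ ω, ξ ω = ⌈r⌉ / s ∨ ξ ω = ⌊r⌋ / s)
    (hceil : P {ω | ξ ω = ⌈r⌉ / s} = ENNReal.ofReal (r - ⌊r⌋)) (c : ℝ) :
    ∫ ω, (c * ξ ω - c * (r / s)) ^ 2 ∂P = c ^ 2 * (Int.fract r * (1 - Int.fract r)) / s ^ 2 := by
  rw [integral_comp_of_stochastic_rounding hξ hrange hceil (fun y ↦ (c * y - c * (r / s)) ^ 2),
    ← Int.sq_ceil_sub_mul_fract_add_sq_floor_sub_mul_one_sub_fract r]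
  ring

end StochasticRounding

theorem sum_abs_div_sqrt_sum_sq_le {ι : Type*} [Fintype ι] (x : ι → ℝ) :
    ∑ i, |x i| / √(∑ j, x j ^ 2) ≤ √(Fintype.card ι) := by
  rw [← sum_div]
  exact div_le_of_le_mul₀ (Real.sqrt_nonneg _) (Real.sqrt_nonneg _)
    (Real.sum_abs_le_sqrt_card_mul_sqrt_sum_sq x)

theorem sum_fract_mul_one_sub_fract_le {ι : Type*} [Fintype ι] (x : ι → ℝ) {s : ℝ} (hs : 0 ≤ s) :
    ∑ i, Int.fract (s * |x i| / √(∑ j, x j ^ 2)) * (1 - Int.fract (s * |x i| / √(∑ j, x j ^ 2)))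
      ≤ min (Fintype.card ι : ℝ) (s * √(Fintype.card ι)) := by
  set r : ι → ℝ := fun i ↦ s * |x i| / √(∑ j, x j ^ 2)
  have hsum_r : ∑ i, r i ≤ s * √(Fintype.card ι) := by
    simp only [r, mul_div_assoc, ← mul_sum]
    exact mul_le_mul_of_nonneg_left (sum_abs_div_sqrt_sum_sq_le x) hs
  calc ∑ i, Int.fract (r i) * (1 - Int.fract (r i))
      ≤ ∑ i, min 1 (r i) := sum_le_sum fun i _ ↦
        Int.fract_mul_one_sub_fract_le_min (by positivity)
    _ ≤ min (∑ _i : ι, 1) (∑ i, r i) :=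
        le_min (sum_le_sum fun _ _ ↦ min_le_left _ _) (sum_le_sum fun _ _ ↦ min_le_right _ _)
    _ ≤ min (Fintype.card ι : ℝ) (s * √(Fintype.card ι)) := by
        simpa using min_le_min_left _ hsum_r

theorem stochastic_quantizer_unbiased_and_variance_general
    (d q : ℕ)
    {Ω : Type*} [MeasurableSpace Ω] (P : Measure Ω) [IsProbabilityMeasure P]
    (x : Fin d → ℝ) (hx : x ≠ 0)
    (s : ℝ) (hs : s = 2 ^ (q - 1))
    (nx : ℝ) (hnx : nx = Real.sqrt (∑ j, (x j) ^ 2))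
    (r : Fin d → ℝ) (hr : ∀ i, r i = s * |x i| / nx)
    (ξ : Fin d → Ω → ℝ)
    (hmeas : ∀ i, Measurable (ξ i))
    (hrange : ∀ i ω, ξ i ω = (⌈r i⌉ : ℝ) / s ∨ ξ i ω = (⌊r i⌋ : ℝ) / s)
    (hhi : ∀ i, P {ω | ξ i ω = (⌈r i⌉ : ℝ) / s} = ENNReal.ofReal (r i - ⌊r i⌋))
    (Q : Ω → Fin d → ℝ)
    (hQ : ∀ ω i, Q ω i = nx * Real.sign (x i) * ξ i ω) :
    (∀ i, ∫ ω, Q ω i ∂P = x i) ∧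
    (∫ ω, ∑ i, (Q ω i - x i) ^ 2 ∂P ≤
      min ((d : ℝ) / 2 ^ (2 * (q - 1))) (Real.sqrt d / 2 ^ (q - 1)) * ∑ i, (x i) ^ 2) := by
  have hs0 : 0 < s := hs ▸ by positivity
  have hnx0 : nx ≠ 0 := hnx ▸ Real.sqrt_sum_sq_ne_zero hx
  have hx_eq : ∀ i, x i = nx * Real.sign (x i) * (r i / s) := fun i ↦ by
    rw [hr, mul_div_assoc, mul_div_cancel_left₀ _ hs0.ne', mul_comm nx, mul_assoc,
      mul_div_cancel₀ _ hnx0, Real.sign_mul_abs]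
  have hdev : ∀ ω i,
      Q ω i - x i = nx * Real.sign (x i) * ξ i ω - nx * Real.sign (x i) * (r i / s) :=
    fun ω i ↦ by rw [hQ, ← hx_eq i]
  refine ⟨fun i ↦ ?_, ?_⟩
  · simp_rw [hQ, integral_const_mul, integral_of_stochastic_rounding (hmeas i) (hrange i) (hhi i)]
    exact (hx_eq i).symm
  calc ∫ ω, ∑ i, (Q ω i - x i) ^ 2 ∂P
      = ∑ i, (nx * Real.sign (x i)) ^ 2 * (Int.fract (r i) * (1 - Int.fract (r i))) / s ^ 2 := by
        simp_rw [hdev]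
        rw [integral_finsetSum _ fun i _ ↦ integrable_comp_of_forall_eq_or_eq (hmeas i) (hrange i)
          fun y ↦ (nx * Real.sign (x i) * y - nx * Real.sign (x i) * (r i / s)) ^ 2]
        simp_rw [integral_sq_mul_sub_of_stochastic_rounding (hmeas _) (hrange _) (hhi _)]
    _ ≤ ∑ i, nx ^ 2 * (Int.fract (r i) * (1 - Int.fract (r i))) / s ^ 2 := by
        refine sum_le_sum fun i _ ↦ ?_
        have := Int.fract_mul_one_sub_fract_nonneg (r i)
        gcongr ?_ * _ / _
        exact Real.sq_mul_sign_le nx (x i)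
    _ = nx ^ 2 / s ^ 2 * ∑ i, Int.fract (r i) * (1 - Int.fract (r i)) := by
        rw [mul_sum]
        exact sum_congr rfl fun i _ ↦ by ring
    _ ≤ nx ^ 2 / s ^ 2 * min (d : ℝ) (s * √d) := by
        gcongr
        simpa [hr, hnx] using sum_fract_mul_one_sub_fract_le x hs0.le
    _ = min ((d : ℝ) / 2 ^ (2 * (q - 1))) (√d / 2 ^ (q - 1)) * ∑ i, x i ^ 2 := by
        rw [mul_comm 2, pow_mul, ← hs, hnx, Real.sq_sqrt (by positivity),
          mul_min_of_nonneg _ _ (by positivity), min_mul_of_nonneg _ _ (by positivity)]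
        field_simp

/-- The q-bit stochastic quantizer of QSGD (with `s = 2^(q-1)` levels) is
unbiased and satisfies the variance bound
`E‖Q(x,q) - x‖² ≤ min(d/2^(2(q-1)), √d/2^(q-1)) ‖x‖²`. -/
theorem stochastic_quantizer_unbiased_and_variance
    (d q : ℕ) (hd : 0 < d) (hq : 1 ≤ q)
    {Ω : Type*} [MeasurableSpace Ω] (P : Measure Ω) [IsProbabilityMeasure P]
    (x : Fin d → ℝ) (hx : x ≠ 0)
    (s : ℝ) (hs : s = 2 ^ (q - 1))
    (nx : ℝ) (hnx : nx = Real.sqrt (∑ j, (x j) ^ 2))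
    (r : Fin d → ℝ) (hr : ∀ i, r i = s * |x i| / nx)
    (ξ : Fin d → Ω → ℝ)
    (hmeas : ∀ i, Measurable (ξ i))
    (hindep : ProbabilityTheory.iIndepFun ξ P)
    (hrange : ∀ i ω, ξ i ω = (⌈r i⌉ : ℝ) / s ∨ ξ i ω = (⌊r i⌋ : ℝ) / s)
    (hhi : ∀ i, P {ω | ξ i ω = (⌈r i⌉ : ℝ) / s} = ENNReal.ofReal (r i - ⌊r i⌋))
    (Q : Ω → Fin d → ℝ)
    (hQ : ∀ ω i, Q ω i = nx * Real.sign (x i) * ξ i ω) :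
    (∀ i, ∫ ω, Q ω i ∂P = x i) ∧
    (∫ ω, ∑ i, (Q ω i - x i) ^ 2 ∂P ≤
      min ((d : ℝ) / 2 ^ (2 * (q - 1))) (Real.sqrt d / 2 ^ (q - 1)) * ∑ i, (x i) ^ 2) :=
  stochastic_quantizer_unbiased_and_variance_general d q P x hx s hs nx hnx r hr ξ hmeas hrange hhi
    Q hQ
end

section
/- Adding a sub-channel under equal power allocation does not always increase rate: there exist M, gains |h_m|^2 > 0, budget P̄ > 0, a current assignment set S ⊆ {1,...,M}, and a new channel m' ∉ S such that Σ_{m∈S∪{m'}} log2(1 + P̄|h_m|^2/(σ_0^2(|S|+1))) < Σ_{m∈S} log2(1 + P̄|h_m|^2/(σ_0^2|S|)); i.e., the potential gain ΔR in Eq. (5) of the paper can be negative. -/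
/-- Adding a sub-channel under equal power allocation can strictly decrease the
sum rate: the potential gain ΔR of Eq. (5) can be negative. -/
theorem equal_power_extra_channel_can_hurt :
    ∃ (M : ℕ) (hg : Fin M → ℝ) (σ0sq Pbar : ℝ) (S : Finset (Fin M)) (m' : Fin M),
      (∀ m, 0 < hg m) ∧ 0 < σ0sq ∧ 0 < Pbar ∧ S.Nonempty ∧ m' ∉ S ∧
      ∑ m ∈ insert m' S, Real.logb 2 (1 + Pbar * hg m / (σ0sq * ((S.card : ℝ) + 1))) <
      ∑ m ∈ S, Real.logb 2 (1 + Pbar * hg m / (σ0sq * (S.card : ℝ))) := by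
  refine ⟨2, ![1, 1/4], 1, 2, {0}, 1, ?_, one_pos, two_pos, ⟨0, by simp⟩, by decide, ?_⟩
  · intro m
    fin_cases m <;> norm_num
  · have h1 : ((insert (1 : Fin 2) {0} : Finset (Fin 2)).sum
        (fun m => Real.logb 2 (1 + 2 * (![1, (1:ℝ)/4]) m / (1 * ((({0} : Finset (Fin 2)).card : ℝ) + 1)))))
        = Real.logb 2 2 + Real.logb 2 (5/4) := by
      rw [Finset.sum_insert (by decide), Finset.sum_singleton]
      norm_num [add_comm]
    have h2 : (({0} : Finset (Fin 2)).sum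
        (fun m => Real.logb 2 (1 + 2 * (![1, (1:ℝ)/4]) m / (1 * (({0} : Finset (Fin 2)).card : ℝ)))))
        = Real.logb 2 3 := by
      rw [Finset.sum_singleton]; norm_num
    rw [h1, h2, ← Real.logb_mul (by norm_num) (by norm_num)]
    apply Real.logb_lt_logb one_lt_two <;> norm_num
end
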